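/- Let d ≥ 4 be an integer and let 𝒜 be a simplicial complex with |𝒜| ≥ 2^d - 2d + 2. Then ∑_{F ∈ 𝒜} 1/(|F|+1) ≥ (2^{d+1}-1)/(d+1) - (2d-2)/3. -/

import Mathlib

/-!
In colex order the `i`-th finite subset of `ℕ` is `i.bitIndices`; `colexWeight j n` is the sum of
`1 / (#s + j + 1)` over the first `n` of them. Splitting a down-closed family along an element `a`
into the sets avoiding `a` and the links of `a` (a smaller down-closed family contained in the
former), the superadditivity `colexWeight j (a + b) ≤ colexWeight j a + colexWeight (j + 1) b` for
`b ≤ a` yields the weighted Kruskal–Katona bound `colexWeight 0 #𝒜 ≤ ∑ s ∈ 𝒜, 1 / (#s + 1)`.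
The first `2 ^ d` sets in colex order are the subsets of `{0, …, d - 1}`, of total weight
`(2 ^ (d + 1) - 1) / (d + 1)`, and the last `2 * d - 2` of them have at least two elements, so they
weigh at most `1 / 3` each.
-/

open Finset

def colexWeight (j n : ℕ) : ℚ := ∑ i ∈ range n, 1 / ((i.bitIndices.length : ℚ) + j + 1)

@[simp] lemma colexWeight_zero (j : ℕ) : colexWeight j 0 = 0 := by simp [colexWeight]

lemma colexWeight_succ (j n : ℕ) :
    colexWeight j (n + 1) = colexWeight j n + 1 / ((n.bitIndices.length : ℚ) + j + 1) :=
  sum_range_succ _ _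

lemma colexWeight_one (j : ℕ) : colexWeight j 1 = 1 / ((j : ℚ) + 1) := by
  simp [colexWeight_succ]

lemma colexWeight_mono (j : ℕ) : Monotone (colexWeight j) := fun _ _ hmn ↦
  sum_le_sum_of_subset_of_nonneg (range_subset_range.2 hmn) fun _ _ _ ↦ by positivity

lemma colexWeight_two_mul (j n : ℕ) :
    colexWeight j (2 * n) = colexWeight j n + colexWeight (j + 1) n := by
  induction n with
  | zero => simp
  | succ n ih =>
    rw [show 2 * (n + 1) = 2 * n + 1 + 1 by ring, colexWeight_succ, colexWeight_succ _ (2 * n),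
      ih, colexWeight_succ j n, colexWeight_succ (j + 1) n]
    simp only [Nat.bitIndices_two_mul, Nat.bitIndices_two_mul_add_one, List.length_map,
      List.length_cons]
    push_cast
    ring

lemma colexWeight_two_mul_add_one (j n : ℕ) :
    colexWeight j (2 * n + 1) = colexWeight j (n + 1) + colexWeight (j + 1) n := by
  rw [colexWeight_succ, colexWeight_two_mul, colexWeight_succ, Nat.bitIndices_two_mul,
    List.length_map]
  ring

lemma colexWeight_succ_sub_le (j n : ℕ) :
    colexWeight (j + 1) (n + 1) - colexWeight (j + 1) n ≤
      colexWeight j (n + 1) - colexWeight j n := by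
  simp only [colexWeight_succ, add_sub_cancel_left]
  gcongr
  linarith

lemma colexWeight_le_add {j a b n : ℕ} (hab : a + b = n) (hba : b ≤ a) :
    colexWeight j n ≤ colexWeight j a + colexWeight (j + 1) b := by
  induction n using Nat.strong_induction_on generalizing j a b with
  | _ n ih =>
  rcases Nat.eq_zero_or_pos b with rfl | hb
  · simp [← hab]
  rcases hba.eq_or_lt with rfl | hlt
  · rw [← hab, ← two_mul, colexWeight_two_mul]
  obtain ⟨α, rfl | rfl⟩ := Nat.even_or_odd' a <;> obtain ⟨β, rfl | rfl⟩ := Nat.even_or_odd' b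
  · have h₀ := ih (α + β) (by omega) (j := j) (a := α) (b := β) rfl (by omega)
    have h₁ := ih (α + β) (by omega) (j := j + 1) (a := α) (b := β) rfl (by omega)
    rw [← hab, ← mul_add, colexWeight_two_mul, colexWeight_two_mul, colexWeight_two_mul]
    linarith
  · have h₀ := ih (α + β + 1) (by omega) (j := j) (a := α) (b := β + 1) rfl (by omega)
    have h₁ := ih (α + β) (by omega) (j := j + 1) (a := α) (b := β) rfl (by omega)
    rw [← hab, show 2 * α + (2 * β + 1) = 2 * (α + β) + 1 by ring, colexWeight_two_mul_add_one,
      colexWeight_two_mul, colexWeight_two_mul_add_one]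
    linarith
  · have h₀ := ih (α + β + 1) (by omega) (j := j) (a := α + 1) (b := β) (by ring) (by omega)
    have h₁ := ih (α + β) (by omega) (j := j + 1) (a := α) (b := β) rfl (by omega)
    rw [← hab, show 2 * α + 1 + 2 * β = 2 * (α + β) + 1 by ring, colexWeight_two_mul_add_one,
      colexWeight_two_mul_add_one, colexWeight_two_mul]
    linarith
  · have h₀ := ih (α + β + 1) (by omega) (j := j) (a := α + 1) (b := β) (by ring) (by omega)
    have h₁ := ih (α + β + 1) (by omega) (j := j + 1) (a := α) (b := β + 1) rfl (by omega)
    have h₂ := colexWeight_succ_sub_le (j + 1) β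
    rw [← hab, show 2 * α + 1 + (2 * β + 1) = 2 * (α + β + 1) by ring, colexWeight_two_mul,
      colexWeight_two_mul_add_one, colexWeight_two_mul_add_one]
    linarith

lemma Finset.sum_memberSubfamily_add_sum_nonMemberSubfamily {α β : Type*} [DecidableEq α]
    [AddCommMonoid β] (a : α) (𝒜 : Finset (Finset α)) (f : Finset α → β) :
    ∑ s ∈ 𝒜.memberSubfamily a, f (insert a s) + ∑ s ∈ 𝒜.nonMemberSubfamily a, f s =
      ∑ s ∈ 𝒜, f s := by
  rw [memberSubfamily, sum_image ((erase_injOn' a).mono (by simp)), nonMemberSubfamily,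
    ← sum_filter_add_sum_filter_not 𝒜 (a ∈ ·)]
  exact congrArg (· + _) <| sum_congr rfl fun s hs ↦ by rw [insert_erase (mem_filter.1 hs).2]

theorem IsLowerSet.colexWeight_card_le_sum {α : Type*} [DecidableEq α] {𝒜 : Finset (Finset α)}
    (h𝒜 : IsLowerSet (𝒜 : Set (Finset α))) (j : ℕ) :
    colexWeight j #𝒜 ≤ ∑ s ∈ 𝒜, 1 / ((#s : ℚ) + j + 1) := by
  induction 𝒜 using memberFamily_induction_on generalizing j with
  | empty => simp
  | singleton_empty => simp [colexWeight_one]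
  | @subfamily a 𝒜 ih_non ih_mem =>
    have h_insert : ∀ s ∈ 𝒜.memberSubfamily a,
        1 / ((#(insert a s) : ℚ) + j + 1) = 1 / ((#s : ℚ) + ↑(j + 1) + 1) := fun s hs ↦ by
      rw [card_insert_of_notMem (mem_memberSubfamily.1 hs).2]
      push_cast
      ring
    rw [← sum_memberSubfamily_add_sum_nonMemberSubfamily a, sum_congr rfl h_insert, add_comm]
    calc colexWeight j #𝒜
        ≤ colexWeight j #(𝒜.nonMemberSubfamily a) + colexWeight (j + 1) #(𝒜.memberSubfamily a) :=
          colexWeight_le_add (by rw [add_comm, card_memberSubfamily_add_card_nonMemberSubfamily])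
            (card_le_card h𝒜.memberSubfamily_subset_nonMemberSubfamily)
      _ ≤ _ := add_le_add (ih_non h𝒜.nonMemberSubfamily j) (ih_mem h𝒜.memberSubfamily (j + 1))

lemma colexWeight_two_pow (j m : ℕ) :
    colexWeight j (2 ^ m) = ∑ s ∈ (range m).powerset, 1 / ((#s : ℚ) + j + 1) := by
  induction m generalizing j with
  | zero => simp [colexWeight_one]
  | succ m ih =>
    rw [pow_succ', colexWeight_two_mul, ih, ih, range_add_one,
      sum_powerset_insert notMem_range_self]
    refine congrArg (_ + ·) <| sum_congr rfl fun s hs ↦ ?_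
    rw [card_insert_of_notMem fun h ↦ notMem_range_self (mem_powerset.1 hs h)]
    push_cast
    ring

lemma Nat.sum_range_choose_div_add_one (n : ℕ) :
    ∑ k ∈ range (n + 1), (n.choose k : ℚ) / (k + 1) = (2 ^ (n + 1) - 1) / (n + 1) := by
  have h_absorb (k : ℕ) : (n.choose k : ℚ) / (k + 1) = ((n + 1).choose (k + 1) : ℚ) / (n + 1) := by
    rw [div_eq_div_iff (by positivity) (by positivity)]
    exact_mod_cast (mul_comm _ _).trans (Nat.add_one_mul_choose_eq n k)
  have h_sum : ∑ k ∈ range (n + 1), ((n + 1).choose (k + 1) : ℚ) = 2 ^ (n + 1) - 1 := by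
    have := Nat.sum_range_choose (n + 1)
    rw [sum_range_succ', Nat.choose_zero_right] at this
    rw [eq_sub_iff_add_eq]
    exact_mod_cast this
  rw [sum_congr rfl fun k _ ↦ h_absorb k, ← sum_div, h_sum]

lemma Finset.sum_powerset_one_div_card_add_one {α : Type*} (s : Finset α) :
    ∑ t ∈ s.powerset, 1 / ((#t : ℚ) + 1) = (2 ^ (#s + 1) - 1) / (#s + 1) := by
  rw [sum_powerset_apply_card (fun k ↦ 1 / ((k : ℚ) + 1)), ← Nat.sum_range_choose_div_add_one]
  simp [div_eq_mul_inv]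

lemma colexWeight_zero_two_pow (m : ℕ) :
    colexWeight 0 (2 ^ m) = (2 ^ (m + 1) - 1) / (m + 1) := by
  have h := Finset.sum_powerset_one_div_card_add_one (range m)
  rw [card_range] at h
  simpa [colexWeight_two_pow] using h

lemma Nat.two_le_length_bitIndices {m i : ℕ} (h₁ : 2 ^ m < i) (h₂ : i < 2 ^ (m + 1)) :
    2 ≤ i.bitIndices.length := by
  have hi := Nat.sum_map_two_pow_bitIndices i
  rcases hL : i.bitIndices with _ | ⟨k, _ | ⟨l, L⟩⟩
  · simp only [hL, List.map_nil, List.sum_nil] at hi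
    omega
  · simp only [hL, List.map_cons, List.map_nil, List.sum_cons, List.sum_nil, add_zero] at hi
    subst hi
    have := (Nat.pow_lt_pow_iff_right one_lt_two).1 h₁
    have := (Nat.pow_lt_pow_iff_right one_lt_two).1 h₂
    omega
  · simp

lemma colexWeight_two_pow_succ_le {j m N : ℕ} (h₁ : 2 ^ m < N) (h₂ : N ≤ 2 ^ (m + 1)) :
    colexWeight j (2 ^ (m + 1)) ≤ colexWeight j N + ((2 ^ (m + 1) - N : ℕ) : ℚ) / (j + 3) := by
  rw [colexWeight, colexWeight, ← sum_range_add_sum_Ico _ h₂, ← Nat.card_Ico, div_eq_mul_one_div,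
    ← nsmul_eq_mul]
  gcongr
  refine sum_le_card_nsmul _ _ _ fun i hi ↦ ?_
  have := Nat.two_le_length_bitIndices (h₁.trans_le (mem_Ico.1 hi).1) (mem_Ico.1 hi).2
  refine one_div_le_one_div_of_le (by positivity) ?_
  qify at this
  linarith

lemma Nat.two_mul_add_two_le_two_pow {m : ℕ} (hm : 3 ≤ m) : 2 * m + 2 ≤ 2 ^ m := by
  induction m, hm using Nat.le_induction with
  | base => norm_num
  | succ m _ ih => rw [pow_succ]; omega

theorem weight_bound_simple_general (d : ℕ) (hd : 4 ≤ d) (A : Finset (Finset ℕ))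
    (hdc : ∀ X ∈ A, ∀ Y ⊆ X, Y ∈ A)
    (hAcard : 2 ^ d - 2 * d + 2 ≤ A.card) :
    ((2 : ℚ) ^ (d + 1) - 1) / ((d : ℚ) + 1) - (2 * (d : ℚ) - 2) / 3 ≤
      ∑ F ∈ A, (1 : ℚ) / ((F.card : ℚ) + 1) := by
  obtain ⟨m, rfl⟩ : ∃ m, d = m + 1 := ⟨d - 1, by omega⟩
  have hm := Nat.two_mul_add_two_le_two_pow (m := m) (by omega)
  have h_gap : 2 ^ (m + 1) - (2 ^ (m + 1) - 2 * (m + 1) + 2) = 2 * m := by rw [pow_succ]; omega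
  have h_tail := colexWeight_two_pow_succ_le (j := 0) (m := m) (N := 2 ^ (m + 1) - 2 * (m + 1) + 2)
    (by rw [pow_succ]; omega) (by omega)
  have h_family := IsLowerSet.colexWeight_card_le_sum (fun X Y hYX hX ↦ hdc X hX Y hYX) 0
  rw [colexWeight_zero_two_pow, h_gap] at h_tail
  simp only [Nat.cast_zero, add_zero, zero_add] at h_tail h_family
  push_cast at h_tail ⊢
  linarith [colexWeight_mono 0 hAcard]

theorem weight_bound_simple (d : ℕ) (hd : 4 ≤ d) (A : Finset (Finset ℕ))
    (hne : A.Nonempty) (hdc : ∀ X ∈ A, ∀ Y ⊆ X, Y ∈ A)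
    (hAcard : 2 ^ d - 2 * d + 2 ≤ A.card) :
    ((2 : ℚ) ^ (d + 1) - 1) / ((d : ℚ) + 1) - (2 * (d : ℚ) - 2) / 3 ≤
      ∑ F ∈ A, (1 : ℚ) / ((F.card : ℚ) + 1) :=
  weight_bound_simple_general d hd A hdc hAcard
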